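/- Let a, b > 0 and let L be the additive subgroup of ℝ² generated by (a, 0) and (0, b). Then the distance from the point (a/2, b/2) to the set L equals √(a² + b²)/2; moreover, for every w ∈ ℝ², the distance from w to L is at most √(a² + b²)/2, with equality if and only if w − (a/2, b/2) ∈ L. -/

import Mathlib

set_option maxHeartbeats 1000000


/-- The point of the Euclidean plane with coordinates `(a, b)`. -/
noncomputable def pt (a b : ℝ) : EuclideanSpace ℝ (Fin 2) :=
  (WithLp.equiv 2 (Fin 2 → ℝ)).symm ![a, b]

lemma pt_comb (a b : ℝ) (m n : ℤ) : m • pt a 0 + n • pt 0 b = pt (m*a) (n*b) := by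
  ext i; fin_cases i <;> simp [pt]

lemma dist_pt (x y u v : ℝ) : dist (pt x y) (pt u v) = Real.sqrt ((x-u)^2 + (y-v)^2) := by
  rw [EuclideanSpace.dist_eq]
  simp [pt, Fin.sum_univ_two, Real.dist_eq, sq_abs]

lemma eq_pt (w : EuclideanSpace ℝ (Fin 2)) : w = pt (w 0) (w 1) := by
  ext i; fin_cases i <;> simp [pt]

lemma half_le (t : ℤ) : (1/4 : ℝ) ≤ (1/2 - (t:ℝ))^2 := by
  rcases le_or_gt t 0 with h | h
  · have : (t:ℝ) ≤ 0 := by exact_mod_cast h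
    nlinarith
  · have : (1:ℝ) ≤ t := by exact_mod_cast h
    nlinarith

lemma round_sq (a x : ℝ) (ha : 0 < a) :
    ∃ m : ℤ, (x - m*a)^2 ≤ a^2/4 ∧
      ((x - m*a)^2 = a^2/4 → ∃ k : ℤ, x - a/2 = k*a) := by
  set m := round (x/a) with hmdef
  set u := x/a - m with hudef
  have hx : x - (m:ℝ)*a = a * u := by
    rw [hudef]; field_simp
  have habs : |u| ≤ 1/2 := abs_sub_round (x/a)
  have h2 : u^2 ≤ (1/2:ℝ)^2 := by
    rw [← sq_abs]; exact pow_le_pow_left₀ (abs_nonneg _) habs 2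
  refine ⟨m, ?_, ?_⟩
  · rw [hx, mul_pow]; nlinarith
  · intro h
    rw [hx, mul_pow] at h
    have ha2 : (0:ℝ) < a^2 := by positivity
    have hu2 : u^2 = 1/4 := by nlinarith
    have habse : |u| = 1/2 := by
      rw [← Real.sqrt_sq_eq_abs, hu2, show (1/4:ℝ) = (1/2)^2 by norm_num,
        Real.sqrt_sq (by norm_num : (0:ℝ) ≤ 1/2)]
    rcases (abs_eq (by norm_num : (0:ℝ) ≤ 1/2)).mp habse with hc | hc
    · refine ⟨m, ?_⟩
      have hxq : x = ((m:ℝ) + 1/2) * a := by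
        have : x/a = (m:ℝ) + 1/2 := by rw [hudef] at hc; linarith
        rw [div_eq_iff ha.ne'] at this; exact this
      rw [hxq]; ring
    · refine ⟨m - 1, ?_⟩
      have hxq : x = ((m:ℝ) - 1/2) * a := by
        have : x/a = (m:ℝ) - 1/2 := by rw [hudef] at hc; linarith
        rw [div_eq_iff ha.ne'] at this; exact this
      rw [hxq]; push_cast; ring

theorem stmt10 (a b : ℝ) (ha : 0 < a) (hb : 0 < b)
    (L : AddSubgroup (EuclideanSpace ℝ (Fin 2)))
    (hL : L = AddSubgroup.closure {pt a 0, pt 0 b}) :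
    Metric.infDist (pt (a / 2) (b / 2)) (L : Set (EuclideanSpace ℝ (Fin 2))) =
      Real.sqrt (a ^ 2 + b ^ 2) / 2 ∧
    ∀ w : EuclideanSpace ℝ (Fin 2),
      Metric.infDist w (L : Set (EuclideanSpace ℝ (Fin 2))) ≤ Real.sqrt (a ^ 2 + b ^ 2) / 2 ∧
      (Metric.infDist w (L : Set (EuclideanSpace ℝ (Fin 2))) = Real.sqrt (a ^ 2 + b ^ 2) / 2 ↔
        w - pt (a / 2) (b / 2) ∈ L) := by
  have hmem : ∀ v : EuclideanSpace ℝ (Fin 2),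
      v ∈ L ↔ ∃ m n : ℤ, v = pt (m*a) (n*b) := by
    intro v
    rw [hL, AddSubgroup.mem_closure_pair]
    constructor
    · rintro ⟨m, n, rfl⟩; exact ⟨m, n, pt_comb a b m n⟩
    · rintro ⟨m, n, rfl⟩; exact ⟨m, n, pt_comb a b m n⟩
  have hne : (L : Set (EuclideanSpace ℝ (Fin 2))).Nonempty := ⟨0, zero_mem L⟩
  have hab : (0:ℝ) ≤ a^2 + b^2 := by positivity
  have hsq : Real.sqrt (a^2 + b^2) / 2 = Real.sqrt ((a^2 + b^2)/4) := by
    rw [show (a^2+b^2)/4 = (a^2+b^2)*(1/2:ℝ)^2 by ring, Real.sqrt_mul hab,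
      Real.sqrt_sq (by norm_num : (0:ℝ) ≤ 1/2)]
    ring
  have main : ∀ w : EuclideanSpace ℝ (Fin 2),
      Metric.infDist w (L : Set (EuclideanSpace ℝ (Fin 2))) ≤ Real.sqrt (a ^ 2 + b ^ 2) / 2 ∧
      (Metric.infDist w (L : Set (EuclideanSpace ℝ (Fin 2))) = Real.sqrt (a ^ 2 + b ^ 2) / 2 ↔
        w - pt (a / 2) (b / 2) ∈ L) := by
    intro w
    set x := w 0
    set y := w 1
    obtain ⟨m, hm, hm'⟩ := round_sq a x ha
    obtain ⟨n, hn, hn'⟩ := round_sq b y hb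
    have hpmem : pt (m*a) (n*b) ∈ L := (hmem _).mpr ⟨m, n, rfl⟩
    have hdist : dist w (pt (m*a) (n*b)) = Real.sqrt ((x - m*a)^2 + (y - n*b)^2) := by
      conv_lhs => rw [eq_pt w]
      exact dist_pt x y (m*a) (n*b)
    have hdle : dist w (pt (m*a) (n*b)) ≤ Real.sqrt (a^2 + b^2) / 2 := by
      rw [hdist, hsq]
      exact Real.sqrt_le_sqrt (by linarith)
    have hle : Metric.infDist w (L : Set (EuclideanSpace ℝ (Fin 2)))
        ≤ Real.sqrt (a^2 + b^2) / 2 :=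
      le_trans (Metric.infDist_le_dist_of_mem hpmem) hdle
    refine ⟨hle, ?_, ?_⟩
    · intro he
      have hde : dist w (pt (m*a) (n*b)) = Real.sqrt (a^2+b^2)/2 :=
        le_antisymm hdle (he ▸ Metric.infDist_le_dist_of_mem hpmem)
      rw [hdist, hsq] at hde
      have hsum : (x - m*a)^2 + (y - n*b)^2 = (a^2+b^2)/4 :=
        (Real.sqrt_inj (by positivity) (by positivity)).mp hde
      have hx : (x - m*a)^2 = a^2/4 := by linarith
      have hy : (y - n*b)^2 = b^2/4 := by linarith
      obtain ⟨k, hk⟩ := hm' hx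
      obtain ⟨l, hl⟩ := hn' hy
      refine (hmem _).mpr ⟨k, l, ?_⟩
      have hws : w - pt (a/2) (b/2) = pt (x - a/2) (y - b/2) := by
        conv_lhs => rw [eq_pt w]
        ext i; fin_cases i <;> simp [pt] <;> rfl
      rw [hws, hk, hl]
    · intro hv
      obtain ⟨k, l, hkl⟩ := (hmem _).mp hv
      have hw : w = pt (k*a + a/2) (l*b + b/2) := by
        rw [sub_eq_iff_eq_add.mp hkl]
        ext i; fin_cases i <;> simp [pt]
      refine le_antisymm hle (le_of_not_gt fun hlt => ?_)
      obtain ⟨p, hp, hdp⟩ := (Metric.infDist_lt_iff hne).mp hlt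
      obtain ⟨m', n', rfl⟩ := (hmem p).mp hp
      rw [hw, dist_pt, hsq] at hdp
      have h1 : a^2/4 ≤ (k*a + a/2 - m'*a)^2 := by
        have hid : ((k:ℝ)*a + a/2 - m'*a)^2 = a^2 * (1/2 - (((m' - k : ℤ)):ℝ))^2 := by
          push_cast; ring
        rw [hid]
        have := half_le (m' - k)
        nlinarith [sq_nonneg a]
      have h2 : b^2/4 ≤ (l*b + b/2 - n'*b)^2 := by
        have hid : ((l:ℝ)*b + b/2 - n'*b)^2 = b^2 * (1/2 - (((n' - l : ℤ)):ℝ))^2 := by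
          push_cast; ring
        rw [hid]
        have := half_le (n' - l)
        nlinarith [sq_nonneg b]
      have := Real.sqrt_le_sqrt (show (a^2+b^2)/4 ≤
        ((k:ℝ)*a + a/2 - m'*a)^2 + ((l:ℝ)*b + b/2 - n'*b)^2 by linarith)
      linarith
  refine ⟨?_, main⟩
  rw [(main (pt (a/2) (b/2))).2]
  simpa using zero_mem L
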